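/- arXiv:2310.05675 — 2 statements merged into one kernel-verified Lean document; each statement's English description precedes it below -/
import Mathlib

section
/- Let X = G + J where G is a continuous centered Gaussian process and J an independent compound Poisson process with intensity λ, jump mean μ₁. Suppose the G-prediction E[G_t | F^G_u] is given by a measurable functional m̂^G_t(u) of (G_s : s ≤ u). Then E[X_t | F^X_u] = m̂^G_t(u) + J_u + λ(t−u)μ₁ almost surely, for 0 ≤ u ≤ t. -/
/-!
Write `X t = G t + J u + (J t - J u)`. Since `G` is independent of `J`, enlarging `F^G_u` by
`F^J_u` does not change the prediction of `G t`: both `G t` and `E[G t | F^G_u]` are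
`σ(G)`-measurable, so their integrals over `A ∩ B` (`A ∈ F^G_u`, `B ∈ F^J_u`) are `μ B` times
their integrals over `A`, and these sets form a π-system generating `F^G_u ⊔ F^J_u = F^X_u`.
The term `J u` is `F^X_u`-measurable, and the increment is independent of `F^X_u` with the law
of `J (t - u)`. Its mean `lam (t - u) μ₁` is Wald's identity for a Poisson number of jumps: on
`{N = n}` the compound sum is the partial sum of `n` jumps, which is independent of `N`.
-/

open MeasureTheory ProbabilityTheory Real

/-- The sigma-algebra generated by a real-valued process up to time `u`. -/
noncomputable def natFilt {Ω : Type*} [MeasurableSpace Ω] (Y : ℝ → Ω → ℝ) (u : ℝ) :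
    MeasurableSpace Ω :=
  ⨆ s ∈ Set.Iic u, MeasurableSpace.comap (Y s) inferInstance

open scoped NNReal Nat

section NatFilt

variable {Ω : Type*} {mΩ : MeasurableSpace Ω} {Y : ℝ → Ω → ℝ}

theorem natFilt_le (hY : ∀ s, Measurable (Y s)) (u : ℝ) : natFilt Y u ≤ mΩ :=
  iSup₂_le fun s _ => (hY s).comap_le

theorem natFilt_le_iSup_comap (u : ℝ) :
    natFilt Y u ≤ ⨆ s, MeasurableSpace.comap (Y s) inferInstance :=
  iSup₂_le fun s _ => le_iSup (fun s => MeasurableSpace.comap (Y s) inferInstance) s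

theorem measurable_natFilt (u : ℝ) : Measurable[natFilt Y u] (Y u) :=
  measurable_iff_comap_le.mpr <|
    le_iSup₂ (f := fun s (_ : s ∈ Set.Iic u) => MeasurableSpace.comap (Y s) inferInstance) u
      (Set.mem_Iic.mpr le_rfl)

end NatFilt

namespace MeasurableSpace

variable {Ω : Type*}

theorem sup_eq_generateFrom_image2_inter (m₁ m₂ : MeasurableSpace Ω) :
    m₁ ⊔ m₂ = generateFrom
      (Set.image2 (· ∩ ·) {s | MeasurableSet[m₁] s} {s | MeasurableSet[m₂] s}) := by
  refine le_antisymm (sup_le (fun s hs => ?_) (fun s hs => ?_)) (generateFrom_le ?_)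
  · exact measurableSet_generateFrom ⟨s, hs, Set.univ, .univ, Set.inter_univ s⟩
  · exact measurableSet_generateFrom ⟨Set.univ, .univ, s, hs, Set.univ_inter s⟩
  · rintro _ ⟨A, hA, B, hB, rfl⟩
    exact (le_sup_left (b := m₂) A hA).inter (le_sup_right (a := m₁) B hB)

theorem isPiSystem_image2_inter (m₁ m₂ : MeasurableSpace Ω) :
    IsPiSystem (Set.image2 (· ∩ ·) {s | MeasurableSet[m₁] s} {s | MeasurableSet[m₂] s}) := by
  rintro _ ⟨A₁, hA₁, B₁, hB₁, rfl⟩ _ ⟨A₂, hA₂, B₂, hB₂, rfl⟩ -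
  exact ⟨A₁ ∩ A₂, hA₁.inter hA₂, B₁ ∩ B₂, hB₁.inter hB₂, Set.inter_inter_inter_comm _ _ _ _⟩

end MeasurableSpace

section CondExp

variable {Ω : Type*} {m m₁ m₂ mΩ : MeasurableSpace Ω} {μ : Measure Ω} {f g a b : Ω → ℝ}

theorem setIntegral_eq_of_isPiSystem {C : Set (Set Ω)} (hm : m ≤ mΩ)
    (hgen : m = MeasurableSpace.generateFrom C) (hC : IsPiSystem C)
    (hf : Integrable f μ) (hg : Integrable g μ)
    (hfg : ∀ s ∈ C, ∫ x in s, f x ∂μ = ∫ x in s, g x ∂μ) (huniv : ∫ x, f x ∂μ = ∫ x, g x ∂μ)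
    {s : Set Ω} (hs : MeasurableSet[m] s) :
    ∫ x in s, f x ∂μ = ∫ x in s, g x ∂μ := by
  have htrim : ∀ {h : Ω → ℝ}, Integrable h μ → ∀ {t}, MeasurableSet[m] t →
      (μ.withDensityᵥ h).trim hm t = ∫ x in t, h x ∂μ := fun hh t ht => by
    rw [VectorMeasure.trim_measurableSet_eq hm ht, withDensityᵥ_apply hh (hm t ht)]
  have hext : (μ.withDensityᵥ f).trim hm = (μ.withDensityᵥ g).trim hm := by
    refine VectorMeasure.ext_of_generateFrom C (fun t ht => ?_) hgen hC ?_
    · have htm : MeasurableSet[m] t := hgen ▸ MeasurableSpace.measurableSet_generateFrom ht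
      rw [htrim hf htm, htrim hg htm, hfg t ht]
    · simpa [htrim hf .univ, htrim hg .univ] using huniv
  rw [← htrim hf hs, ← htrim hg hs, hext]

theorem condExp_sup_ae_eq_of_indep [IsFiniteMeasure μ] (hm : m ≤ mΩ) (hm₂ : m₂ ≤ mΩ)
    (hm₁ : m₁ ≤ m) (hind : Indep m m₂ μ) (hf : StronglyMeasurable[m] f) (hfi : Integrable f μ) :
    μ[f | m₁ ⊔ m₂] =ᵐ[μ] μ[f | m₁] := by
  have hm₁Ω : m₁ ≤ mΩ := hm₁.trans hm
  have hsupΩ : m₁ ⊔ m₂ ≤ mΩ := sup_le hm₁Ω hm₂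
  -- `μ B` splits off by independence, since `A.indicator h` is `m`-measurable.
  have hinter : ∀ {h : Ω → ℝ}, StronglyMeasurable[m] h → Integrable h μ →
      ∀ A B, MeasurableSet[m₁] A → MeasurableSet[m₂] B →
        ∫ x in A ∩ B, h x ∂μ = μ.real B * ∫ x in A, h x ∂μ := by
    intro h hh hhi A B hA hB
    have hAh : StronglyMeasurable[m] (A.indicator h) := hh.indicator (hm₁ A hA)
    rw [Set.inter_comm, ← setIntegral_indicator (hm₁Ω A hA), ← integral_indicator (hm₁Ω A hA)]
    exact Indep.setIntegral_eq_mul (X := A.indicator h) (f := id) hm₂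
      (indep_of_indep_of_le_right hind.symm hAh.measurable.comap_le)
      (hAh.measurable.mono hm le_rfl).aemeasurable hB aestronglyMeasurable_id
  refine (ae_eq_condExp_of_forall_setIntegral_eq hsupΩ hfi
    (fun s _ _ => integrable_condExp.integrableOn) (fun s hs _ => ?_)
    (stronglyMeasurable_condExp.mono (le_sup_left : m₁ ≤ m₁ ⊔ m₂)).aestronglyMeasurable).symm
  refine setIntegral_eq_of_isPiSystem hsupΩ (MeasurableSpace.sup_eq_generateFrom_image2_inter _ _)
    (MeasurableSpace.isPiSystem_image2_inter _ _) integrable_condExp hfi ?_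
    (integral_condExp hm₁Ω) hs
  rintro _ ⟨A, hA, B, hB, rfl⟩
  rw [hinter (stronglyMeasurable_condExp.mono hm₁) integrable_condExp A B hA hB,
    hinter hf hfi A B hA hB, setIntegral_condExp hm₁Ω hfi hA]

theorem condExp_ae_eq_add_integral_sub_of_indep [IsFiniteMeasure μ] (hm : m ≤ mΩ)
    (ha : StronglyMeasurable[m] a) (hai : Integrable a μ) (hbi : Integrable b μ)
    (hsub : Measurable (b - a)) (hind : Indep (MeasurableSpace.comap (b - a) inferInstance) m μ) :
    μ[b | m] =ᵐ[μ] fun ω => a ω + ∫ x, (b - a) x ∂μ := by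
  have hsplit : b = a + (b - a) := (add_sub_cancel a b).symm
  rw [hsplit, add_sub_cancel_left]
  filter_upwards [condExp_add hai (hbi.sub hai) m,
    condExp_indep_eq hsub.comap_le hm (measurable_iff_comap_le.mpr le_rfl).stronglyMeasurable hind]
    with ω hadd hindep
  rw [hadd, Pi.add_apply, condExp_of_stronglyMeasurable hm ha hai, hindep]

end CondExp

set_option linter.deprecated false in
theorem poissonPMF_toMeasure (r : ℝ≥0) : (poissonPMF r).toMeasure = poissonMeasure r :=
  Measure.ext_of_singleton fun n => by
    rw [PMF.toMeasure_apply_singleton _ _ (measurableSet_singleton n), poissonMeasure_singleton]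
    rfl

theorem hasSum_poissonMeasure_real_mul (r : ℝ≥0) :
    HasSum (fun n : ℕ => (poissonMeasure r).real {n} * n) r := by
  have hshift : ∀ n : ℕ, (poissonMeasure r).real {n + 1} * (n + 1 : ℕ) =
      r * (exp (-r) * r ^ n / n !) := by
    intro n
    rw [poissonMeasure_real_singleton, Nat.factorial_succ, pow_succ]
    push_cast
    field_simp
  have h := (hasSum_nat_add_iff (f := fun n : ℕ => (poissonMeasure r).real {n} * n) 1).mp
    (by simpa only [hshift, mul_one] using (hasSum_one_poissonMeasure r).mul_left (r : ℝ))
  simpa using h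

section CompoundSum

variable {Ω : Type*} {mΩ : MeasurableSpace Ω} {μ : Measure Ω}

def compoundSum (ξ : ℕ → Ω → ℝ) (N : Ω → ℕ) (ω : Ω) : ℝ :=
  ∑ k ∈ Finset.range (N ω), ξ k ω

variable {ξ : ℕ → Ω → ℝ} {N : Ω → ℕ}

theorem measurable_compoundSum (hξ : ∀ k, Measurable (ξ k)) (hN : Measurable N) :
    Measurable (compoundSum ξ N) := by
  have hsum : Measurable fun p : Ω × ℕ => ∑ k ∈ Finset.range p.2, ξ k p.1 :=
    measurable_from_prod_countable_left fun n =>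
      Finset.measurable_sum (Finset.range n) fun k _ => hξ k
  exact hsum.comp (measurable_id.prodMk hN)

theorem compoundSum_eq_of_eq {ω : Ω} {n : ℕ} (h : N ω = n) :
    compoundSum ξ N ω = ∑ k ∈ Finset.range n, ξ k ω := by
  rw [compoundSum, h]

theorem setIntegral_preimage_comp_compoundSum
    (hξ : ∀ k, IdentDistrib (ξ k) (ξ 0) μ μ) (hN : Measurable N)
    (hind : Indep (MeasurableSpace.comap N inferInstance)
      (⨆ k, MeasurableSpace.comap (ξ k) inferInstance) μ)
    {g : ℝ → ℝ} (hg : Measurable g) (n : ℕ) :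
    ∫ ω in N ⁻¹' {n}, g (compoundSum ξ N ω) ∂μ =
      μ.real (N ⁻¹' {n}) * ∫ ω, g (∑ k ∈ Finset.range n, ξ k ω) ∂μ := by
  set Ξ : Ω → ℕ → ℝ := fun ω k => ξ k ω
  have hΞ : MeasurableSpace.comap Ξ inferInstance ≤
      ⨆ k, MeasurableSpace.comap (ξ k) inferInstance := by
    simp only [MeasurableSpace.pi, MeasurableSpace.comap_iSup, MeasurableSpace.comap_comp]
    rfl
  have hA : MeasurableSet (N ⁻¹' {n}) := hN (measurableSet_singleton n)
  rw [setIntegral_congr_fun hA fun ω hω => by rw [compoundSum_eq_of_eq hω]]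
  exact Indep.setIntegral_eq_mul (X := Ξ) (f := fun x => g (∑ k ∈ Finset.range n, x k))
    hN.comap_le (indep_of_indep_of_le_right hind hΞ)
    (aemeasurable_pi_lambda _ fun k => (hξ k).aemeasurable_fst)
    (measurable_iff_comap_le.mpr le_rfl (measurableSet_singleton n))
    (hg.comp (Finset.measurable_sum _ fun k _ => measurable_pi_apply k)).aestronglyMeasurable

theorem integral_norm_sum_range_le (hξ : ∀ k, IdentDistrib (ξ k) (ξ 0) μ μ)
    (hξ0 : Integrable (ξ 0) μ) (n : ℕ) :
    ∫ ω, ‖∑ k ∈ Finset.range n, ξ k ω‖ ∂μ ≤ n * ∫ ω, ‖ξ 0 ω‖ ∂μ := by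
  have hξi : ∀ k, Integrable (ξ k) μ := fun k => (hξ k).integrable_iff.mpr hξ0
  calc ∫ ω, ‖∑ k ∈ Finset.range n, ξ k ω‖ ∂μ
      ≤ ∫ ω, ∑ k ∈ Finset.range n, ‖ξ k ω‖ ∂μ :=
        integral_mono (integrable_finsetSum _ fun k _ => hξi k).norm
          (integrable_finsetSum _ fun k _ => (hξi k).norm) fun ω => norm_sum_le _ _
    _ = n * ∫ ω, ‖ξ 0 ω‖ ∂μ := by
        have hk : ∀ k, ∫ ω, ‖ξ k ω‖ ∂μ = ∫ ω, ‖ξ 0 ω‖ ∂μ :=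
          fun k => ((hξ k).comp measurable_norm).integral_eq
        simp only [integral_finsetSum _ fun k _ => (hξi k).norm, hk, Finset.sum_const,
          Finset.card_range, nsmul_eq_mul]

theorem integrable_compoundSum (hξ : ∀ k, IdentDistrib (ξ k) (ξ 0) μ μ) (hN : Measurable N)
    (hind : Indep (MeasurableSpace.comap N inferInstance)
      (⨆ k, MeasurableSpace.comap (ξ k) inferInstance) μ)
    (hξ0 : Integrable (ξ 0) μ)
    (hNmean : Summable fun n : ℕ => μ.real (N ⁻¹' {n}) * n) :
    Integrable (compoundSum ξ N) μ := by
  have hcover : ⋃ n, N ⁻¹' {n} = Set.univ := by ext; simp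
  rw [← integrableOn_univ, ← hcover]
  refine integrableOn_iUnion_of_summable_integral_norm (fun n => ?_) ?_
  · exact (integrable_finsetSum _ fun k _ => (hξ k).integrable_iff.mpr hξ0).integrableOn.congr_fun
      (fun ω hω => (compoundSum_eq_of_eq hω).symm) (hN (measurableSet_singleton n))
  · refine (hNmean.mul_left (∫ ω, ‖ξ 0 ω‖ ∂μ)).of_nonneg_of_le
      (fun n => integral_nonneg fun ω => norm_nonneg _) fun n => ?_
    rw [setIntegral_preimage_comp_compoundSum hξ hN hind measurable_norm n]
    calc μ.real (N ⁻¹' {n}) * ∫ ω, ‖∑ k ∈ Finset.range n, ξ k ω‖ ∂μ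
        ≤ μ.real (N ⁻¹' {n}) * (n * ∫ ω, ‖ξ 0 ω‖ ∂μ) :=
          mul_le_mul_of_nonneg_left (integral_norm_sum_range_le hξ hξ0 n) measureReal_nonneg
      _ = _ := by ring

theorem integral_compoundSum (hξ : ∀ k, IdentDistrib (ξ k) (ξ 0) μ μ) (hN : Measurable N)
    (hind : Indep (MeasurableSpace.comap N inferInstance)
      (⨆ k, MeasurableSpace.comap (ξ k) inferInstance) μ)
    (hξ0 : Integrable (ξ 0) μ) {m : ℝ}
    (hNmean : HasSum (fun n : ℕ => μ.real (N ⁻¹' {n}) * n) m) :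
    ∫ ω, compoundSum ξ N ω ∂μ = m * ∫ ω, ξ 0 ω ∂μ := by
  have hcover : ⋃ n, N ⁻¹' {n} = Set.univ := by ext; simp
  have h := hasSum_integral_iUnion (fun n => hN (measurableSet_singleton n))
    (pairwise_disjoint_fiber N) (integrable_compoundSum hξ hN hind hξ0 hNmean.summable).integrableOn
  have hpiece : (fun n => ∫ ω in N ⁻¹' {n}, compoundSum ξ N ω ∂μ) =
      fun n => μ.real (N ⁻¹' {n}) * n * ∫ ω, ξ 0 ω ∂μ := by
    funext n
    rw [setIntegral_preimage_comp_compoundSum hξ hN hind (g := fun x => x) measurable_id n,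
      integral_finsetSum _ fun k _ => (hξ k).integrable_iff.mpr hξ0]
    simp [(hξ _).integral_eq, mul_assoc]
  rw [hcover, Measure.restrict_univ, hpiece] at h
  exact h.unique (hNmean.mul_right _)

theorem integrable_compoundSum_and_integral_eq_of_poisson
    (hξ : ∀ k, IdentDistrib (ξ k) (ξ 0) μ μ) (hN : Measurable N)
    (hind : Indep (MeasurableSpace.comap N inferInstance)
      (⨆ k, MeasurableSpace.comap (ξ k) inferInstance) μ)
    (hξ0 : Integrable (ξ 0) μ) {c : ℝ} (hc : 0 ≤ c)
    (hlaw : μ.map N = poissonMeasure c.toNNReal) :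
    Integrable (compoundSum ξ N) μ ∧ ∫ ω, compoundSum ξ N ω ∂μ = c * ∫ ω, ξ 0 ω ∂μ := by
  have hNmean : HasSum (fun n : ℕ => μ.real (N ⁻¹' {n}) * n) c := by
    simpa only [← map_measureReal_apply hN (measurableSet_singleton _), hlaw,
      Real.coe_toNNReal _ hc] using hasSum_poissonMeasure_real_mul c.toNNReal
  exact ⟨integrable_compoundSum hξ hN hind hξ0 hNmean.summable,
    integral_compoundSum hξ hN hind hξ0 hNmean⟩

end CompoundSum

theorem integrable_of_map_eq_gaussianReal {Ω : Type*} {mΩ : MeasurableSpace Ω} {μ : Measure Ω}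
    {X : Ω → ℝ} {m : ℝ} {v : ℝ≥0} (hX : μ.map X = gaussianReal m v) : Integrable X μ :=
  HasGaussianLaw.integrable ⟨hX ▸ inferInstance⟩

theorem mixed_condexp_general
    {Ω : Type*} [mΩ : MeasurableSpace Ω] (μ : Measure Ω) [IsProbabilityMeasure μ]
    (lam μ₁ : ℝ) (hlam : 0 < lam)
    (G : ℝ → Ω → ℝ) (N : ℝ → Ω → ℕ) (ξ : ℕ → Ω → ℝ) (J X : ℝ → Ω → ℝ)
    (hGmeas : ∀ t, Measurable (G t)) (hNmeas : ∀ t, Measurable (N t))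
    (hξmeas : ∀ k, Measurable (ξ k))
    -- `G` is a continuous centered Gaussian process
    (hGauss : ∀ (n : ℕ) (c : Fin n → ℝ) (ts : Fin n → ℝ), ∃ σ2 : NNReal,
      Measure.map (fun ω => ∑ i, c i * G (ts i) ω) μ = gaussianReal 0 σ2)
    -- `J` is a compound Poisson process with intensity `lam`
    (hJ : ∀ t ω, J t ω = ∑ k ∈ Finset.range (N t ω), ξ k ω)
    (hN0 : ∀ ω, N 0 ω = 0)
    (hNpois : ∀ s t : ℝ, 0 ≤ s → s ≤ t →
      Measure.map (fun ω => N t ω - N s ω) μ =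
        (poissonPMF ((lam * (t - s)).toNNReal)).toMeasure)
    -- i.i.d. square-integrable jumps with mean `μ₁`, independent of `N`
    (hident : ∀ k, Measure.map (ξ k) μ = Measure.map (ξ 0) μ)
    (hξN : Indep (⨆ k, MeasurableSpace.comap (ξ k) inferInstance)
        (⨆ t, MeasurableSpace.comap (N t) inferInstance) μ)
    (hsq : Integrable (fun ω => (ξ 0 ω) ^ 2) μ)
    (hmean : ∫ ω, ξ 0 ω ∂μ = μ₁)
    -- `J` is independent of `G`
    (hGJ : Indep (⨆ t, MeasurableSpace.comap (G t) inferInstance)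
        (⨆ t, MeasurableSpace.comap (J t) inferInstance) μ)
    -- increments of `J` are stationary and independent of the joint past
    (hincr : ∀ u t : ℝ, 0 ≤ u → u ≤ t →
      Indep (MeasurableSpace.comap (fun ω => J t ω - J u ω) inferInstance)
        (natFilt G u ⊔ natFilt J u) μ)
    (hstat : ∀ u t : ℝ, 0 ≤ u → u ≤ t →
      Measure.map (fun ω => J t ω - J u ω) μ = Measure.map (J (t - u)) μ)
    -- `X = G + J`; by continuity of `G`, `F^X = F^{G,J}`
    (hX : ∀ t ω, X t ω = G t ω + J t ω)
    (hfilt : ∀ u : ℝ, natFilt X u = natFilt G u ⊔ natFilt J u)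
    -- the `G`-prediction is given by an `F^G_u`-measurable functional `m̂^G_t(u)`
    (u t : ℝ) (hu : 0 ≤ u) (hut : u ≤ t)
    (mhat : Ω → ℝ)
    (hmhat : μ[G t | natFilt G u] =ᵐ[μ] mhat) :
    μ[X t | natFilt X u] =ᵐ[μ] fun ω => mhat ω + J u ω + lam * (t - u) * μ₁ := by
  have hJsum : ∀ r, J r = compoundSum ξ (N r) := fun r => funext (hJ r)
  have hJmeas : ∀ r, Measurable (J r) := fun r => hJsum r ▸ measurable_compoundSum hξmeas (hNmeas r)
  have hξ0 : Integrable (ξ 0) μ :=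
    (memLp_two_iff_integrable_sq (hξmeas 0).aestronglyMeasurable |>.mpr hsq).integrable one_le_two
  have hJr : ∀ r, 0 ≤ r → Integrable (J r) μ ∧ ∫ ω, J r ω ∂μ = lam * r * μ₁ := fun r hr => by
    rw [hJsum r, ← hmean]
    refine integrable_compoundSum_and_integral_eq_of_poisson
      (fun k => ⟨(hξmeas k).aemeasurable, (hξmeas 0).aemeasurable, hident k⟩) (hNmeas r)
      (indep_of_indep_of_le_right hξN (le_iSup_of_le r le_rfl)).symm
      hξ0 (mul_nonneg hlam.le hr) ?_
    simpa [hN0, poissonPMF_toMeasure] using hNpois 0 r le_rfl hr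
  have hGt : Integrable (G t) μ := by
    obtain ⟨v, hv⟩ := hGauss 1 1 (fun _ => t)
    exact integrable_of_map_eq_gaussianReal (by simpa using hv)
  have hGcond : μ[G t | natFilt G u ⊔ natFilt J u] =ᵐ[μ] mhat :=
    (condExp_sup_ae_eq_of_indep (iSup_le fun s => (hGmeas s).comap_le) (natFilt_le hJmeas u)
      (natFilt_le_iSup_comap u) (indep_of_indep_of_le_right hGJ (natFilt_le_iSup_comap u))
      (measurable_iff_comap_le.mpr (le_iSup_of_le t le_rfl)).stronglyMeasurable hGt).trans hmhat
  have hJcond : μ[J t | natFilt G u ⊔ natFilt J u] =ᵐ[μ] fun ω => J u ω + lam * (t - u) * μ₁ := by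
    have hJu : Measurable[natFilt G u ⊔ natFilt J u] (J u) :=
      (measurable_natFilt u).mono le_sup_right le_rfl
    have hincrLaw : IdentDistrib (J t - J u) (J (t - u)) μ μ :=
      ⟨((hJmeas t).sub (hJmeas u)).aemeasurable, (hJmeas _).aemeasurable, hstat u t hu hut⟩
    rw [← (hJr _ (sub_nonneg.mpr hut)).2, ← hincrLaw.integral_eq]
    exact condExp_ae_eq_add_integral_sub_of_indep
      (sup_le (natFilt_le hGmeas u) (natFilt_le hJmeas u)) hJu.stronglyMeasurable (hJr u hu).1
      (hJr t (hu.trans hut)).1 ((hJmeas t).sub (hJmeas u)) (hincr u t hu hut)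
  rw [hfilt u, show X t = G t + J t from funext (hX t)]
  filter_upwards [condExp_add hGt (hJr t (hu.trans hut)).1 _, hGcond, hJcond] with ω hadd hG hJ
  rw [hadd, Pi.add_apply, hG, hJ, add_assoc]

/-- For `X = G + J` with `G` a continuous centered Gaussian process and `J` an
independent compound Poisson process with intensity `lam` and jump mean `μ₁`, if
`E[G_t | F^G_u] = m̂^G_t(u)` then `E[X_t | F^X_u] = m̂^G_t(u) + J_u + lam (t-u) μ₁` a.s. -/
theorem mixed_condexp
    {Ω : Type*} [mΩ : MeasurableSpace Ω] (μ : Measure Ω) [IsProbabilityMeasure μ]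
    (lam μ₁ : ℝ) (hlam : 0 < lam)
    (G : ℝ → Ω → ℝ) (N : ℝ → Ω → ℕ) (ξ : ℕ → Ω → ℝ) (J X : ℝ → Ω → ℝ)
    (hGmeas : ∀ t, Measurable (G t)) (hNmeas : ∀ t, Measurable (N t))
    (hξmeas : ∀ k, Measurable (ξ k))
    -- `G` is a continuous centered Gaussian process
    (hGcont : ∀ ω, Continuous fun t => G t ω)
    (hGauss : ∀ (n : ℕ) (c : Fin n → ℝ) (ts : Fin n → ℝ), ∃ σ2 : NNReal,
      Measure.map (fun ω => ∑ i, c i * G (ts i) ω) μ = gaussianReal 0 σ2)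
    -- `J` is a compound Poisson process with intensity `lam`
    (hJ : ∀ t ω, J t ω = ∑ k ∈ Finset.range (N t ω), ξ k ω)
    (hN0 : ∀ ω, N 0 ω = 0)
    (hNpois : ∀ s t : ℝ, 0 ≤ s → s ≤ t →
      Measure.map (fun ω => N t ω - N s ω) μ =
        (poissonPMF ((lam * (t - s)).toNNReal)).toMeasure)
    -- i.i.d. square-integrable jumps with mean `μ₁`, independent of `N`
    (hiid : iIndepFun ξ μ)
    (hident : ∀ k, Measure.map (ξ k) μ = Measure.map (ξ 0) μ)
    (hξN : Indep (⨆ k, MeasurableSpace.comap (ξ k) inferInstance)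
        (⨆ t, MeasurableSpace.comap (N t) inferInstance) μ)
    (hsq : Integrable (fun ω => (ξ 0 ω) ^ 2) μ)
    (hmean : ∫ ω, ξ 0 ω ∂μ = μ₁)
    -- `J` is independent of `G`
    (hGJ : Indep (⨆ t, MeasurableSpace.comap (G t) inferInstance)
        (⨆ t, MeasurableSpace.comap (J t) inferInstance) μ)
    -- increments of `J` are stationary and independent of the joint past
    (hincr : ∀ u t : ℝ, 0 ≤ u → u ≤ t →
      Indep (MeasurableSpace.comap (fun ω => J t ω - J u ω) inferInstance)
        (natFilt G u ⊔ natFilt J u) μ)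
    (hstat : ∀ u t : ℝ, 0 ≤ u → u ≤ t →
      Measure.map (fun ω => J t ω - J u ω) μ = Measure.map (J (t - u)) μ)
    -- `X = G + J`; by continuity of `G`, `F^X = F^{G,J}`
    (hX : ∀ t ω, X t ω = G t ω + J t ω)
    (hfilt : ∀ u : ℝ, natFilt X u = natFilt G u ⊔ natFilt J u)
    -- the `G`-prediction is given by an `F^G_u`-measurable functional `m̂^G_t(u)`
    (u t : ℝ) (hu : 0 ≤ u) (hut : u ≤ t)
    (mhat : Ω → ℝ)
    (hmhat_meas : Measurable[natFilt G u] mhat)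
    (hmhat : μ[G t | natFilt G u] =ᵐ[μ] mhat) :
    μ[X t | natFilt X u] =ᵐ[μ] fun ω => mhat ω + J u ω + lam * (t - u) * μ₁ :=
  mixed_condexp_general (mΩ := mΩ) μ lam μ₁ hlam G N ξ J X hGmeas hNmeas hξmeas hGauss hJ hN0 hNpois
    hident hξN hsq hmean hGJ hincr hstat hX hfilt u t hu hut mhat hmhat
end

section
/- For the fBm prediction kernel Ψ_H(t,s|u) = (sin(π(H−1/2))/π) s^{1/2−H}(u−s)^{1/2−H} ∫_u^t z^{H−1/2}(z−u)^{H−1/2}/(z−s) dz with 0 < s < u < t and H ∈ (1/2, 1), the integral defining Ψ_H(t,s|u) is finite, and s ↦ Ψ_H(t,s|u) belongs to L²([0,u]). -/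
open MeasureTheory Real

/-- The fBm prediction kernel
`Ψ_H(t,s|u) = (sin(π(H-1/2))/π) s^{1/2-H} (u-s)^{1/2-H}
  ∫_u^t z^{H-1/2} (z-u)^{H-1/2} / (z-s) dz`. -/
noncomputable def PsiH (H t u s : ℝ) : ℝ :=
  (Real.sin (π * (H - 1 / 2)) / π) * s ^ (1 / 2 - H) * (u - s) ^ (1 / 2 - H) *
    ∫ z in Set.Ioc u t, z ^ (H - 1 / 2) * (z - u) ^ (H - 1 / 2) / (z - s)


/-!
For `s < u < z` one has `(z - u)^{H-1/2} / (z - s) ≤ (z - u)^{H-3/2}`, which is integrable near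
`z = u` because `H > 1/2`; so the inner integral is bounded uniformly in `s ∈ (0, u)` and
`|Ψ_H(t,s|u)| ≤ C s^{1/2-H} (u-s)^{1/2-H}`. The square of the right-hand side is a Beta-type
function `s^{1-2H} (u-s)^{1-2H}`, integrable on `(0, u)` because `1 - 2H > -1`, i.e. `H < 1`.
-/

open Set

section BetaType

variable {b u : ℝ}

lemma integrableOn_rpow_Ioo (hb : -1 < b) : IntegrableOn (fun s : ℝ => s ^ b) (Ioo 0 u) :=
  (intervalIntegral.intervalIntegrable_rpow' hb).1.mono_set Ioo_subset_Ioc_self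

lemma integrableOn_sub_rpow_Ioo (hb : -1 < b) :
    IntegrableOn (fun s : ℝ => (u - s) ^ b) (Ioo 0 u) := by
  have h := (intervalIntegral.intervalIntegrable_rpow' hb (a := 0) (b := u)).comp_sub_left u
  rw [sub_zero, sub_self] at h
  exact h.symm.1.mono_set Ioo_subset_Ioc_self

/-- One of `s`, `u - s` is at least `u / 2`, and a nonpositive power of it is at most `(u/2)^b`. -/
lemma rpow_mul_sub_rpow_le {s : ℝ} (hb : b ≤ 0) (hs : s ∈ Ioo 0 u) :
    s ^ b * (u - s) ^ b ≤ (u / 2) ^ b * (s ^ b + (u - s) ^ b) := by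
  obtain ⟨hs0, hsu⟩ := hs
  have hu : 0 < u / 2 := by linarith
  have hs_nonneg : 0 ≤ s ^ b := rpow_nonneg hs0.le b
  have hus_nonneg : 0 ≤ (u - s) ^ b := rpow_nonneg (by linarith) b
  rcases le_total s (u / 2) with hle | hle
  · have : (u - s) ^ b ≤ (u / 2) ^ b := rpow_le_rpow_of_nonpos hu (by linarith) hb
    nlinarith
  · have : s ^ b ≤ (u / 2) ^ b := rpow_le_rpow_of_nonpos hu hle hb
    nlinarith

lemma integrableOn_rpow_mul_sub_rpow (hb1 : -1 < b) (hb0 : b ≤ 0) :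
    IntegrableOn (fun s : ℝ => s ^ b * (u - s) ^ b) (Ioo 0 u) := by
  refine (((integrableOn_rpow_Ioo hb1).add (integrableOn_sub_rpow_Ioo hb1)).const_mul
    ((u / 2) ^ b)).mono' (by fun_prop) ?_
  filter_upwards [ae_restrict_mem measurableSet_Ioo] with s hs
  rw [norm_of_nonneg (mul_nonneg (rpow_nonneg hs.1.le b) (rpow_nonneg (by linarith [hs.2]) b))]
  exact rpow_mul_sub_rpow_le hb0 hs

lemma memLp_two_rpow_mul_sub_rpow (hb1 : -1 / 2 < b) (hb0 : b ≤ 0) :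
    MemLp (fun s : ℝ => s ^ b * (u - s) ^ b) 2 (volume.restrict (Ioo 0 u)) := by
  rw [memLp_two_iff_integrable_sq (by fun_prop)]
  refine (integrableOn_rpow_mul_sub_rpow (b := 2 * b) (by linarith) (by linarith)).congr ?_
  filter_upwards [ae_restrict_mem measurableSet_Ioo] with s hs
  have hsq {x : ℝ} (hx : 0 ≤ x) : x ^ (2 * b) = (x ^ b) ^ 2 := by
    rw [mul_comm, ← rpow_mul_natCast hx]
    norm_num
  simp only [mul_pow, ← hsq hs.1.le, ← hsq (sub_nonneg.2 hs.2.le)]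

end BetaType

section PredictionIntegral

variable {a u s t : ℝ}

lemma integrableOn_rpow_mul_sub_rpow_div_sub (ha : 0 ≤ a) (hsu : s < u) :
    IntegrableOn (fun z : ℝ => z ^ a * (z - u) ^ a / (z - s)) (Ioc u t) := by
  have hcont : ContinuousOn (fun z : ℝ => z ^ a * (z - u) ^ a / (z - s)) (Icc u t) :=
    ((continuousOn_id.rpow_const fun _ _ => Or.inr ha).mul
      ((continuousOn_id.sub continuousOn_const).rpow_const fun _ _ => Or.inr ha)).div
      (continuousOn_id.sub continuousOn_const) fun z hz => sub_ne_zero.2 (by linarith [hz.1])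
  exact (hcont.integrableOn_compact isCompact_Icc).mono_set Ioc_subset_Icc_self

lemma integrableOn_sub_rpow_Ioc (ha : 0 < a) :
    IntegrableOn (fun z : ℝ => (z - u) ^ (a - 1)) (Ioc u t) := by
  have h := (intervalIntegral.intervalIntegrable_rpow' (r := a - 1) (by linarith)
    (a := 0) (b := t - u)).comp_sub_right u
  rw [zero_add, sub_add_cancel] at h
  exact h.1

lemma rpow_mul_sub_rpow_div_sub_le (ha : 0 ≤ a) (hu : 0 ≤ u) (hsu : s < u) {z : ℝ}
    (hz : z ∈ Ioc u t) : z ^ a * (z - u) ^ a / (z - s) ≤ t ^ a * (z - u) ^ (a - 1) := by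
  obtain ⟨huz, hzt⟩ := hz
  have hzu : 0 < z - u := sub_pos.2 huz
  rw [rpow_sub_one hzu.ne', mul_div_assoc]
  exact mul_le_mul (rpow_le_rpow (by linarith) hzt ha)
    (div_le_div_of_nonneg_left (rpow_nonneg hzu.le a) hzu (by linarith))
    (div_nonneg (rpow_nonneg hzu.le a) (by linarith)) (rpow_nonneg (by linarith) a)

lemma norm_integral_rpow_mul_sub_rpow_div_sub_le (ha : 0 < a) (hu : 0 ≤ u) (hsu : s < u) :
    ‖∫ z in Ioc u t, z ^ a * (z - u) ^ a / (z - s)‖ ≤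
      ∫ z in Ioc u t, t ^ a * (z - u) ^ (a - 1) := by
  refine (norm_integral_le_integral_norm _).trans <| setIntegral_mono_on
    (integrableOn_rpow_mul_sub_rpow_div_sub ha.le hsu).norm
    ((integrableOn_sub_rpow_Ioc ha).const_mul _) measurableSet_Ioc fun z hz => ?_
  have hzu : 0 ≤ z - u := by linarith [hz.1]
  rw [norm_of_nonneg (div_nonneg (mul_nonneg (rpow_nonneg (by linarith [hz.1]) a)
    (rpow_nonneg hzu a)) (by linarith [hz.1]))]
  exact rpow_mul_sub_rpow_div_sub_le ha.le hu hsu hz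

end PredictionIntegral

lemma stronglyMeasurable_PsiH (H t u : ℝ) : StronglyMeasurable (PsiH H t u) := by
  have hint : StronglyMeasurable fun p : ℝ × ℝ =>
      p.2 ^ (H - 1 / 2) * (p.2 - u) ^ (H - 1 / 2) / (p.2 - p.1) :=
    Measurable.stronglyMeasurable (by fun_prop)
  exact ((by fun_prop : Measurable fun s : ℝ =>
    sin (π * (H - 1 / 2)) / π * s ^ (1 / 2 - H) * (u - s) ^ (1 / 2 - H)).mul
    hint.integral_prod_right'.measurable).stronglyMeasurable

lemma exists_abs_PsiH_le {H : ℝ} (hH : 1 / 2 < H) (t u : ℝ) : ∃ c, ∀ s ∈ Ioo 0 u,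
    |PsiH H t u s| ≤ c * (s ^ (1 / 2 - H) * (u - s) ^ (1 / 2 - H)) := by
  refine ⟨|sin (π * (H - 1 / 2)) / π| *
    ∫ z in Ioc u t, t ^ (H - 1 / 2) * (z - u) ^ (H - 1 / 2 - 1), fun s ⟨hs0, hsu⟩ => ?_⟩
  have hI := norm_integral_rpow_mul_sub_rpow_div_sub_le (t := t) (sub_pos.2 hH)
    (hs0.trans hsu).le hsu
  have hs_nonneg : 0 ≤ s ^ (1 / 2 - H) := rpow_nonneg hs0.le _
  have hus_nonneg : 0 ≤ (u - s) ^ (1 / 2 - H) := rpow_nonneg (sub_nonneg.2 hsu.le) _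
  calc |PsiH H t u s| = |sin (π * (H - 1 / 2)) / π| *
        ‖∫ z in Ioc u t, z ^ (H - 1 / 2) * (z - u) ^ (H - 1 / 2) / (z - s)‖ *
        (s ^ (1 / 2 - H) * (u - s) ^ (1 / 2 - H)) := by
        rw [PsiH, abs_mul, abs_mul, abs_mul, abs_of_nonneg hs_nonneg,
          abs_of_nonneg hus_nonneg, norm_eq_abs]
        ring
    _ ≤ _ := by gcongr

theorem fbm_prediction_kernel_L2_general
    (H : ℝ) (hH : H ∈ Set.Ioo (1 / 2 : ℝ) 1)
    (u t : ℝ) :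
    (∀ s ∈ Set.Ioo (0 : ℝ) u,
      IntegrableOn (fun z => z ^ (H - 1 / 2) * (z - u) ^ (H - 1 / 2) / (z - s))
        (Set.Ioc u t) volume)
    ∧ MemLp (fun s => PsiH H t u s) 2 (volume.restrict (Set.Ioc 0 u)) := by
  obtain ⟨hH_gt, hH_lt⟩ := hH
  refine ⟨fun s hs => integrableOn_rpow_mul_sub_rpow_div_sub (by linarith) hs.2, ?_⟩
  obtain ⟨c, hc⟩ := exists_abs_PsiH_le hH_gt t u
  rw [← Measure.restrict_congr_set Ioo_ae_eq_Ioc]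
  refine (memLp_two_rpow_mul_sub_rpow (b := 1 / 2 - H) (by linarith) (by linarith)).of_le_mul
    (c := c) (stronglyMeasurable_PsiH H t u).aestronglyMeasurable ?_
  filter_upwards [ae_restrict_mem measurableSet_Ioo] with s hs
  rw [norm_eq_abs, norm_of_nonneg (mul_nonneg (rpow_nonneg hs.1.le _)
    (rpow_nonneg (sub_nonneg.2 hs.2.le) _))]
  exact hc s hs

/-- for `H ∈ (1/2, 1)` and `0 < u < t`, the integral defining the fBm
prediction kernel `Ψ_H(t,s|u)` is finite for each `s ∈ (0,u)`, and `s ↦ Ψ_H(t,s|u)`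
belongs to `L²([0,u])`. -/
theorem fbm_prediction_kernel_L2
    (H : ℝ) (hH : H ∈ Set.Ioo (1 / 2 : ℝ) 1)
    (u t T : ℝ) (hu : 0 < u) (hut : u < t) (htT : t ≤ T) :
    (∀ s ∈ Set.Ioo (0 : ℝ) u,
      IntegrableOn (fun z => z ^ (H - 1 / 2) * (z - u) ^ (H - 1 / 2) / (z - s))
        (Set.Ioc u t) volume)
    ∧ MemLp (fun s => PsiH H t u s) 2 (volume.restrict (Set.Ioc 0 u)) :=
  fbm_prediction_kernel_L2_general H hH u t
end
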